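/- Let (A, K) → (B, K) be a morphism of pairs whose underlying group homomorphism is the identity on K. If M is an (A, K)-module, then the weak (B, K)-module P(M) = B ⊗_A M (with B acting by left multiplication) is in fact a (B, K)-module; that is, for every ξ ∈ 𝔨 and b ⊗ m ∈ B ⊗_A M, one has dν(ξ)(b ⊗ m) = π(ψ_B(ξ))(b ⊗ m). Consequently, restriction of the base-change functor defines a left adjoint to the forgetful functor from (B, K)-modules to (A, K)-modules. -/

import Mathlib

/-!
STATEMENT 9: Let `(A, K) → (B, K)` be a morphism of pairs whose underlying
group homomorphism is the identity on `K`.  If `M` is an `(A, K)`-module, then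
the weak `(B, K)`-module `P(M) = B ⊗_A M` (with `B` acting by left
multiplication) is in fact a `(B, K)`-module; consequently, restriction of the
base-change functor defines a left adjoint to the forgetful functor from
`(B, K)`-modules to `(A, K)`-modules.

Formalization: see the file for statement 7 for the modeling of pairs and
(weak) modules.  A morphism of pairs over the identity of `K` is a
`K`-equivariant algebra map `f_a : A → B` with `f_a ∘ ψ_A = ψ_B`
(`PairHomId`).  The first part of the statement is expressed as: there is a
left adjoint `P` of the weak forgetful functor which carries `(A,K)`-modules
to `(B,K)`-modules (for the canonical base-change left adjoint `B ⊗_A (−)`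
this is the displayed computation `dν(ξ)(b ⊗ m) = π(ψ_B(ξ))(b ⊗ m)`); the
second part states that the restricted forgetful functor between the
subcategories of non-weak modules admits a left adjoint.
-/

open CategoryTheory
set_option synthInstance.maxHeartbeats 1000000
set_option maxHeartbeats 1600000

variable (k : Type) [CommRing k]

structure GroupData where
  G : Type
  [grp : Group G]
  L : Type
  [addL : AddCommGroup L]
  [modL : Module k L]
  [lieL : LieRing L]
  [lieAlgL : LieAlgebra k L]
  Ad : G →* (L ≃ₗ[k] L)
  ad_bracket : ∀ (g : G) (x y : L), Ad g ⁅x, y⁆ = ⁅Ad g x, Ad g y⁆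

attribute [instance] GroupData.grp GroupData.addL GroupData.modL GroupData.lieL GroupData.lieAlgL

variable {k}

structure WeakPair (D : GroupData k) where
  A : Type
  [ringA : Ring A]
  [algA : Algebra k A]
  φ : D.G →* (A ≃ₐ[k] A)
  dφ : D.L →ₗ[k] (A →ₗ[k] A)
  dφ_lie : ∀ x y : D.L, dφ ⁅x, y⁆ = dφ x ∘ₗ dφ y - dφ y ∘ₗ dφ x
  dφ_der : ∀ (ξ : D.L) (a b : A), dφ ξ (a * b) = dφ ξ a * b + a * dφ ξ b
  dφ_equiv : ∀ (g : D.G) (ξ : D.L) (a : A), φ g (dφ ξ a) = dφ (D.Ad g ξ) (φ g a)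

attribute [instance] WeakPair.ringA WeakPair.algA

structure HCPair (D : GroupData k) extends WeakPair D where
  ψ : D.L →ₗ[k] A
  ψ_bracket : ∀ x y : D.L, ψ ⁅x, y⁆ = ψ x * ψ y - ψ y * ψ x
  ψ_equiv : ∀ (g : D.G) (ξ : D.L), φ g (ψ ξ) = ψ (D.Ad g ξ)
  dφ_eq : ∀ (ξ : D.L) (a : A), dφ ξ a = ψ ξ * a - a * ψ ξ

variable {D : GroupData k}

structure WeakMod (P : WeakPair D) where
  M : CochainComplex (ModuleCat.{0} k) ℤ
  π : P.A →ₐ[k] End M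
  ν : D.G →* (End M)ˣ
  dν : D.L →ₗ[k] End M
  dν_lie : ∀ x y : D.L, dν ⁅x, y⁆ = dν x * dν y - dν y * dν x
  π_equiv : ∀ (g : D.G) (a : P.A), (ν g : End M) * π a = π (P.φ g a) * (ν g : End M)
  dν_equiv : ∀ (g : D.G) (ξ : D.L), (ν g : End M) * dν ξ = dν (D.Ad g ξ) * (ν g : End M)
  dν_π : ∀ (ξ : D.L) (a : P.A), dν ξ * π a = π (P.dφ ξ a) + π a * dν ξ

namespace WeakMod

variable {P : WeakPair D}

@[ext]
structure Hom (V W : WeakMod P) where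
  hom : V.M ⟶ W.M
  comm_π : ∀ a : P.A, (V.π a : V.M ⟶ V.M) ≫ hom = hom ≫ (W.π a : W.M ⟶ W.M)
  comm_ν : ∀ g : D.G, ((V.ν g : End V.M) : V.M ⟶ V.M) ≫ hom
    = hom ≫ ((W.ν g : End W.M) : W.M ⟶ W.M)
  comm_dν : ∀ ξ : D.L, (V.dν ξ : V.M ⟶ V.M) ≫ hom = hom ≫ (W.dν ξ : W.M ⟶ W.M)

instance : Category (WeakMod P) where
  Hom := Hom
  id V := ⟨𝟙 V.M, by simp, by simp, by simp⟩
  comp f g := ⟨f.hom ≫ g.hom,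
    fun a => by rw [← Category.assoc, f.comm_π, Category.assoc, g.comm_π, Category.assoc],
    fun a => by rw [← Category.assoc, f.comm_ν, Category.assoc, g.comm_ν, Category.assoc],
    fun a => by rw [← Category.assoc, f.comm_dν, Category.assoc, g.comm_dν, Category.assoc]⟩
  id_comp f := Hom.ext (by simp)
  comp_id f := Hom.ext (by simp)
  assoc f g h := Hom.ext (by simp)

/-- The forgetful functor to cochain complexes of `k`-modules. -/
def forgetToComplex (P : WeakPair D) : WeakMod P ⥤ CochainComplex (ModuleCat.{0} k) ℤ where
  obj V := V.M
  map f := f.hom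

end WeakMod

/-- An `(A,K)`-module is a weak `(A,K)`-module on which the two actions of `𝔨`
agree: `dν(ξ) = π(ψ(ξ))`. -/
def IsStrict (P : HCPair D) (V : WeakMod P.toWeakPair) : Prop :=
  ∀ ξ : D.L, V.dν ξ = V.π (P.ψ ξ)


variable {P Q : HCPair D}

/-- A morphism of pairs `(A, K) → (B, K)` whose underlying homomorphism of
group schemes is the identity of `K`. -/
structure PairHomId (P Q : HCPair D) where
  fa : P.A →ₐ[k] Q.A
  equiv_φ : ∀ (g : D.G) (a : P.A), fa (P.φ g a) = Q.φ g (fa a)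
  comm_ψ : ∀ ξ : D.L, fa (P.ψ ξ) = Q.ψ ξ

/-- The forgetful functor on weak modules along a morphism of pairs over the
identity of `K`. -/
def PairHomId.restrictWeak (f : PairHomId P Q) :
    WeakMod Q.toWeakPair ⥤ WeakMod P.toWeakPair where
  obj V :=
    { M := V.M
      π := V.π.comp f.fa
      ν := V.ν
      dν := V.dν
      dν_lie := V.dν_lie
      π_equiv := fun g a => by
        simp only [AlgHom.comp_apply, f.equiv_φ]
        exact V.π_equiv g (f.fa a)
      dν_equiv := V.dν_equiv
      dν_π := fun ξ a => by
        have h : f.fa (P.dφ ξ a) = Q.dφ ξ (f.fa a) := by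
          rw [P.dφ_eq, Q.dφ_eq]
          simp [map_sub, map_mul, f.comm_ψ]
        simp only [AlgHom.comp_apply, h]
        exact V.dν_π ξ (f.fa a) }
  map φf :=
    { hom := φf.hom
      comm_π := fun a => φf.comm_π (f.fa a)
      comm_ν := φf.comm_ν
      comm_dν := φf.comm_dν }
  map_id V := rfl
  map_comp φf φg := rfl

/-- The forgetful functor restricted to the subcategories of non-weak
modules. -/
def PairHomId.restrict (f : PairHomId P Q) :
    ObjectProperty.FullSubcategory (IsStrict Q) ⥤ ObjectProperty.FullSubcategory (IsStrict P) :=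
  ObjectProperty.lift _ (ObjectProperty.ι (IsStrict Q) ⋙ f.restrictWeak)
    (fun V ξ => by
      show V.obj.dν ξ = V.obj.π (f.fa (P.ψ ξ))
      rw [f.comm_ψ]
      exact V.property ξ)


/-!
Degreewise, `B ⊗_A M` is the quotient of `B ⊗_k M` by the span of the relations
`b f(a) ⊗ m - b ⊗ a m`. Left multiplication by `B`, the diagonal action of `K`, the differential
and the Leibniz-rule action `ξ (b ⊗ m) = dφ(ξ) b ⊗ m + b ⊗ ξ m` of `𝔨` all preserve these
relations, which makes `B ⊗_A M` a weak `(B, K)`-module; the adjunction with restriction is the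
usual one of extension of scalars, with unit `m ↦ 1 ⊗ m` and counit `b ⊗ m ↦ b m`.

If `ξ m = ψ_A(ξ) m`, then `b ⊗ ξ m = b f(ψ_A ξ) ⊗ m = b ψ_B(ξ) ⊗ m`, so
`ξ (b ⊗ m) = (ψ_B(ξ) b - b ψ_B(ξ)) ⊗ m + b ψ_B(ξ) ⊗ m = ψ_B(ξ) b ⊗ m`: base change preserves
`(A, K)`-modules, and the adjunction restricts to the full subcategories of such modules.
-/

open TensorProduct

section BalancedTensor

variable {A B N N' : Type} [Ring A] [Algebra k A] [Ring B] [Algebra k B]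
  [AddCommGroup N] [Module k N] [AddCommGroup N'] [Module k N']

def balancedRel (fa : A →ₐ[k] B) (ρ : A → N →ₗ[k] N) : Submodule k (B ⊗[k] N) :=
  Submodule.span k {x | ∃ (b : B) (a : A) (m : N), x = (b * fa a) ⊗ₜ m - b ⊗ₜ ρ a m}

variable {fa : A →ₐ[k] B} {ρ : A → N →ₗ[k] N} {ρ' : A → N' →ₗ[k] N'}

lemma tmul_sub_tmul_mem_balancedRel (b : B) (a : A) (m : N) :
    (b * fa a) ⊗ₜ m - b ⊗ₜ ρ a m ∈ balancedRel fa ρ :=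
  Submodule.subset_span ⟨b, a, m, rfl⟩

lemma balancedRel_le_comap_map {u : B →ₗ[k] B} {v : N →ₗ[k] N'} (σ : A → A)
    (hu : ∀ b a, u (b * fa a) = u b * fa (σ a)) (hv : ∀ a m, v (ρ a m) = ρ' (σ a) (v m)) :
    balancedRel fa ρ ≤ (balancedRel fa ρ').comap (TensorProduct.map u v) := by
  refine Submodule.span_le.mpr ?_
  rintro _ ⟨b, a, m, rfl⟩
  simpa [hu, hv] using tmul_sub_tmul_mem_balancedRel (ρ := ρ') (u b) (σ a) (v m)

lemma balancedRel_le_comap_derivation {u : B →ₗ[k] B} {v : N →ₗ[k] N} (δ : A → A)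
    (hu : ∀ b a, u (b * fa a) = u b * fa a + b * fa (δ a))
    (hv : ∀ a m, v (ρ a m) = ρ (δ a) m + ρ a (v m)) :
    balancedRel fa ρ ≤ (balancedRel fa ρ).comap
      (TensorProduct.map u LinearMap.id + TensorProduct.map LinearMap.id v) := by
  refine Submodule.span_le.mpr ?_
  rintro _ ⟨b, a, m, rfl⟩
  rw [SetLike.mem_coe, Submodule.mem_comap]
  convert add_mem (add_mem (tmul_sub_tmul_mem_balancedRel (u b) a m)
    (tmul_sub_tmul_mem_balancedRel b (δ a) m)) (tmul_sub_tmul_mem_balancedRel b a (v m)) using 1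
  simp only [LinearMap.add_apply, map_sub, map_tmul, hu, hv, LinearMap.id_apply, add_tmul,
    tmul_add]
  abel

lemma balancedRel_le_ker_lift {X : Type} [AddCommGroup X] [Module k X]
    {β : B →ₗ[k] N →ₗ[k] X} (hβ : ∀ b a m, β (b * fa a) m = β b (ρ a m)) :
    balancedRel fa ρ ≤ LinearMap.ker (TensorProduct.lift β) := by
  refine Submodule.span_le.mpr ?_
  rintro _ ⟨b, a, m, rfl⟩
  simp [hβ]

lemma balancedRel_linearMap_ext {X : Type} [AddCommGroup X] [Module k X]
    {g h : (B ⊗[k] N) ⧸ balancedRel fa ρ →ₗ[k] X}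
    (H : ∀ b m, g (Submodule.Quotient.mk (b ⊗ₜ m)) = h (Submodule.Quotient.mk (b ⊗ₜ m))) :
    g = h :=
  Submodule.linearMap_qext _ (TensorProduct.ext' H)

end BalancedTensor

namespace HomologicalComplex

lemma Hom.comm_apply {R : Type*} [Ring R] {ι : Type*} {c : ComplexShape ι}
    {C E : HomologicalComplex (ModuleCat R) c} (t : C ⟶ E) (i j : ι) (x : C.X i) :
    t.f j (C.d i j x) = E.d i j (t.f i x) :=
  congr($(t.comm i j) x).symm

variable {V : Type*} [Category V] [Preadditive V] {ι : Type*} {c : ComplexShape ι}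
  {C : HomologicalComplex V c} (x y : End C) (i : ι)

@[simp] lemma End.add_f : (x + y).f i = x.f i + y.f i := rfl

@[simp] lemma End.sub_f : (x - y).f i = x.f i - y.f i := rfl

@[simp] lemma End.smul_f {R : Type*} [Semiring R] [Linear R V] (r : R) :
    (r • x).f i = r • x.f i := rfl

end HomologicalComplex

@[simp] lemma WeakPair.dφ_one (R : WeakPair D) (ξ : D.L) : R.dφ ξ 1 = 0 := by
  simpa using R.dφ_der ξ 1 1

lemma PairHomId.map_dφ (f : PairHomId P Q) (ξ : D.L) (a : P.A) :
    f.fa (P.dφ ξ a) = Q.dφ ξ (f.fa a) := by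
  simp [P.dφ_eq, Q.dφ_eq, f.comm_ψ]

namespace WeakMod

variable {R : WeakPair D} (V : WeakMod R) {n : ℤ}

lemma π_equiv_apply (g : D.G) (a : R.A) (x : V.M.X n) :
    (V.ν g : End V.M).f n ((V.π a).f n x) = (V.π (R.φ g a)).f n ((V.ν g : End V.M).f n x) :=
  congr(($(V.π_equiv g a)).f n x)

lemma dν_π_apply (ξ : D.L) (a : R.A) (x : V.M.X n) :
    (V.dν ξ).f n ((V.π a).f n x) = (V.π (R.dφ ξ a)).f n x + (V.π a).f n ((V.dν ξ).f n x) :=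
  congr(($(V.dν_π ξ a)).f n x)

lemma dν_equiv_apply (g : D.G) (ξ : D.L) (x : V.M.X n) :
    (V.ν g : End V.M).f n ((V.dν ξ).f n x) = (V.dν (D.Ad g ξ)).f n ((V.ν g : End V.M).f n x) :=
  congr(($(V.dν_equiv g ξ)).f n x)

variable {V} {W : WeakMod R} (φ : V ⟶ W)

lemma Hom.comm_π_apply (a : R.A) (x : V.M.X n) :
    φ.hom.f n ((V.π a).f n x) = (W.π a).f n (φ.hom.f n x) :=
  congr(($(φ.comm_π a)).f n x)

lemma Hom.comm_ν_apply (g : D.G) (x : V.M.X n) :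
    φ.hom.f n ((V.ν g : End V.M).f n x) = (W.ν g : End W.M).f n (φ.hom.f n x) :=
  congr(($(φ.comm_ν g)).f n x)

lemma Hom.comm_dν_apply (ξ : D.L) (x : V.M.X n) :
    φ.hom.f n ((V.dν ξ).f n x) = (W.dν ξ).f n (φ.hom.f n x) :=
  congr(($(φ.comm_dν ξ)).f n x)

end WeakMod

namespace PairHomId

variable (f : PairHomId P Q) {V V' : WeakMod P.toWeakPair} {W : WeakMod Q.toWeakPair}

def baseChangeComplex (V : WeakMod P.toWeakPair) : CochainComplex (ModuleCat.{0} k) ℤ where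
  X n := ModuleCat.of k ((Q.A ⊗[k] V.M.X n) ⧸ balancedRel f.fa (fun a => ((V.π a).f n).hom))
  d i j := ModuleCat.ofHom (Submodule.mapQ _ _ _ (balancedRel_le_comap_map (u := LinearMap.id)
    (v := (V.M.d i j).hom) id (fun _ _ => rfl) (fun a m => ((V.π a).comm_apply i j m).symm)))
  shape i j h := ModuleCat.hom_ext (balancedRel_linearMap_ext fun b m => by simp [V.M.shape i j h])
  d_comp_d' i j l _ _ := ModuleCat.hom_ext (balancedRel_linearMap_ext fun b m => by
    simp [← ModuleCat.comp_apply])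

def tmul {n : ℤ} (b : Q.A) (m : V.M.X n) : (f.baseChangeComplex V).X n :=
  Submodule.Quotient.mk (b ⊗ₜ m)

variable {f}

lemma baseChangeComplex_X_hom_ext {n : ℤ} {X : ModuleCat.{0} k}
    {g h : (f.baseChangeComplex V).X n ⟶ X}
    (H : ∀ b m, g (f.tmul b m) = h (f.tmul b m)) : g = h :=
  ModuleCat.hom_ext (balancedRel_linearMap_ext H)

lemma baseChangeComplex_hom_ext {X : CochainComplex (ModuleCat.{0} k) ℤ}
    {g h : f.baseChangeComplex V ⟶ X}
    (H : ∀ n b (m : V.M.X n), g.f n (f.tmul b m) = h.f n (f.tmul b m)) : g = h :=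
  HomologicalComplex.hom_ext _ _ fun n => baseChangeComplex_X_hom_ext (H n)

section tmul

variable {n : ℤ} (b b' : Q.A) (m m' : V.M.X n)

lemma tmul_mul_fa (a : P.A) : f.tmul (b * f.fa a) m = f.tmul b ((V.π a).f n m) :=
  (Submodule.Quotient.eq _).mpr (tmul_sub_tmul_mem_balancedRel b a m)

@[simp] lemma tmul_add_left : f.tmul (b + b') m = f.tmul b m + f.tmul b' m := by
  rw [tmul, add_tmul]; exact Submodule.Quotient.mk_add ..

@[simp] lemma tmul_add_right : f.tmul b (m + m') = f.tmul b m + f.tmul b m' := by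
  rw [tmul, tmul_add]; exact Submodule.Quotient.mk_add ..

@[simp] lemma tmul_sub_left : f.tmul (b - b') m = f.tmul b m - f.tmul b' m := by
  rw [tmul, sub_tmul]; exact Submodule.Quotient.mk_sub ..

@[simp] lemma tmul_sub_right : f.tmul b (m - m') = f.tmul b m - f.tmul b m' := by
  rw [tmul, TensorProduct.tmul_sub]; exact Submodule.Quotient.mk_sub ..

@[simp] lemma tmul_smul_left (c : k) : f.tmul (c • b) m = c • f.tmul b m := by
  rw [tmul, ← smul_tmul']; exact Submodule.Quotient.mk_smul ..

@[simp] lemma tmul_smul_right (c : k) : f.tmul b (c • m) = c • f.tmul b m := by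
  rw [tmul, TensorProduct.tmul_smul]; exact Submodule.Quotient.mk_smul ..

@[simp] lemma tmul_zero_left : f.tmul (0 : Q.A) m = 0 := by
  rw [tmul, zero_tmul]; exact Submodule.Quotient.mk_zero _

end tmul

variable (f)

@[simp] lemma baseChangeComplex_d_tmul {i j : ℤ} (b : Q.A) (m : V.M.X i) :
    ((f.baseChangeComplex V).d i j).hom (f.tmul b m) = f.tmul b ((V.M.d i j).hom m) := rfl

def baseChangeMap (u : Q.A →ₗ[k] Q.A) (σ : P.A → P.A) (e : V.M ⟶ V'.M)
    (hu : ∀ b a, u (b * f.fa a) = u b * f.fa (σ a))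
    (he : ∀ a, V.π a ≫ e = e ≫ V'.π (σ a)) :
    f.baseChangeComplex V ⟶ f.baseChangeComplex V' where
  f n := ModuleCat.ofHom (Submodule.mapQ _ _ _
    (balancedRel_le_comap_map (v := (e.f n).hom) σ hu (fun a m => congr(($(he a)).f n m))))
  comm' i j _ := baseChangeComplex_X_hom_ext fun b m =>
    congrArg (f.tmul (u b)) (e.comm_apply i j m).symm

@[simp] lemma baseChangeMap_f_tmul (u : Q.A →ₗ[k] Q.A) (σ : P.A → P.A) (e : V.M ⟶ V'.M) hu he
    {n : ℤ} (b : Q.A) (m : V.M.X n) :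
    ((f.baseChangeMap u σ e hu he).f n).hom (f.tmul b m) = f.tmul (u b) ((e.f n).hom m) := rfl

def baseChangeMul (V : WeakMod P.toWeakPair) (b : Q.A) : End (f.baseChangeComplex V) :=
  f.baseChangeMap (LinearMap.mulLeft k b) id (𝟙 V.M) (fun _ _ => by simp [mul_assoc])
    (fun _ => by simp)

@[simp] lemma baseChangeMul_f_tmul (b₀ : Q.A) {n : ℤ} (b : Q.A) (m : V.M.X n) :
    ((f.baseChangeMul V b₀).f n).hom (f.tmul b m) = f.tmul (b₀ * b) m := rfl

def baseChangeAct (V : WeakMod P.toWeakPair) (g : D.G) : End (f.baseChangeComplex V) :=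
  f.baseChangeMap (Q.φ g).toLinearMap (P.φ g) (V.ν g : End V.M)
    (fun b a => by simp [f.equiv_φ]) (fun a => V.π_equiv g a)

@[simp] lemma baseChangeAct_f_tmul (g : D.G) {n : ℤ} (b : Q.A) (m : V.M.X n) :
    ((f.baseChangeAct V g).f n).hom (f.tmul b m)
      = f.tmul (Q.φ g b) ((V.ν g : End V.M).f n m) := rfl

def baseChangeXDν (V : WeakMod P.toWeakPair) (ξ : D.L) (n : ℤ) :
    (f.baseChangeComplex V).X n ⟶ (f.baseChangeComplex V).X n :=
  ModuleCat.ofHom (Submodule.mapQ _ _ _ (balancedRel_le_comap_derivation (P.dφ ξ)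
    (fun b a => by rw [Q.dφ_der, f.map_dφ]) (fun a m => V.dν_π_apply ξ a m)))

@[simp] lemma baseChangeXDν_tmul (ξ : D.L) {n : ℤ} (b : Q.A) (m : V.M.X n) :
    (f.baseChangeXDν V ξ n).hom (f.tmul b m) = f.tmul (Q.dφ ξ b) m + f.tmul b ((V.dν ξ).f n m) :=
  Submodule.Quotient.mk_add ..

def baseChangeDν (V : WeakMod P.toWeakPair) (ξ : D.L) : End (f.baseChangeComplex V) where
  f := f.baseChangeXDν V ξ
  comm' i j _ := baseChangeComplex_X_hom_ext fun b m => by simp [(V.dν ξ).comm_apply]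

@[simp] lemma baseChangeDν_f_tmul (ξ : D.L) {n : ℤ} (b : Q.A) (m : V.M.X n) :
    ((f.baseChangeDν V ξ).f n).hom (f.tmul b m)
      = f.tmul (Q.dφ ξ b) m + f.tmul b ((V.dν ξ).f n m) :=
  f.baseChangeXDν_tmul ξ b m

@[simps]
def baseChangeπ (V : WeakMod P.toWeakPair) : Q.A →ₐ[k] End (f.baseChangeComplex V) where
  toFun := f.baseChangeMul V
  map_one' := baseChangeComplex_hom_ext fun n b m => by simp
  map_mul' x y := baseChangeComplex_hom_ext fun n b m => by simp [End.mul_def, mul_assoc]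
  map_zero' := baseChangeComplex_hom_ext fun n b m => by simp
  map_add' x y := baseChangeComplex_hom_ext fun n b m => by simp [add_mul]
  commutes' c := baseChangeComplex_hom_ext fun n b m => by
    simp [Algebra.algebraMap_eq_smul_one]

@[simps]
def baseChangeν (V : WeakMod P.toWeakPair) : D.G →* End (f.baseChangeComplex V) where
  toFun := f.baseChangeAct V
  map_one' := baseChangeComplex_hom_ext fun n b m => by simp
  map_mul' g g' := baseChangeComplex_hom_ext fun n b m => by simp [End.mul_def]

@[simps]
def baseChangeDνₗ (V : WeakMod P.toWeakPair) : D.L →ₗ[k] End (f.baseChangeComplex V) where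
  toFun := f.baseChangeDν V
  map_add' ξ ξ' := baseChangeComplex_hom_ext fun n b m => by simp; abel
  map_smul' c ξ := baseChangeComplex_hom_ext fun n b m => by simp

abbrev baseChangeObj (V : WeakMod P.toWeakPair) : WeakMod Q.toWeakPair where
  M := f.baseChangeComplex V
  π := f.baseChangeπ V
  ν := (f.baseChangeν V).toHomUnits
  dν := f.baseChangeDνₗ V
  dν_lie x y := baseChangeComplex_hom_ext fun n b m => by
    simp [Q.dφ_lie, V.dν_lie, End.mul_def]
    abel
  π_equiv g a := baseChangeComplex_hom_ext fun n b m => by simp [End.mul_def]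
  dν_equiv g ξ := baseChangeComplex_hom_ext fun n b m => by
    simp [End.mul_def, Q.dφ_equiv, V.dν_equiv_apply]
  dν_π ξ a := baseChangeComplex_hom_ext fun n b m => by
    simp [End.mul_def, Q.dφ_der]
    abel

def baseChange : WeakMod P.toWeakPair ⥤ WeakMod Q.toWeakPair where
  obj := f.baseChangeObj
  map φ :=
    { hom := f.baseChangeMap LinearMap.id id φ.hom (fun _ _ => rfl) φ.comm_π
      comm_π a := baseChangeComplex_hom_ext fun n b m => by simp
      comm_ν g := baseChangeComplex_hom_ext fun n b m => by simp [φ.comm_ν_apply]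
      comm_dν ξ := baseChangeComplex_hom_ext fun n b m => by simp [φ.comm_dν_apply] }
  map_id _ := WeakMod.Hom.ext (baseChangeComplex_hom_ext fun _ _ _ => rfl)
  map_comp _ _ := WeakMod.Hom.ext (baseChangeComplex_hom_ext fun _ _ _ => rfl)

def oneTmul (V : WeakMod P.toWeakPair) : V.M ⟶ f.baseChangeComplex V where
  f n := ModuleCat.ofHom ((Submodule.mkQ _).comp (TensorProduct.mk k Q.A (V.M.X n) 1))
  comm' _ _ _ := rfl

@[simp] lemma oneTmul_f_apply {n : ℤ} (m : V.M.X n) : ((f.oneTmul V).f n).hom m = f.tmul 1 m :=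
  rfl

/- Neither `f.restrictWeak` nor `f.baseChange` unfolds reducibly, so in `baseChangeUnit` and
`baseChangeLift` the compatibility conditions are first restated (`change`) for `simp`. -/
def baseChangeUnit (V : WeakMod P.toWeakPair) : V ⟶ f.restrictWeak.obj (f.baseChange.obj V) where
  hom := f.oneTmul V
  comm_π a := by
    change V.π a ≫ f.oneTmul V = f.oneTmul V ≫ f.baseChangeMul V (f.fa a)
    ext n m
    simp [← tmul_mul_fa]
  comm_ν g := by
    change (V.ν g : End V.M) ≫ f.oneTmul V = f.oneTmul V ≫ f.baseChangeAct V g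
    ext n m
    simp
  comm_dν ξ := by
    change V.dν ξ ≫ f.oneTmul V = f.oneTmul V ≫ f.baseChangeDν V ξ
    ext n m
    simp

/-- `h.hom`, with codomain `W.M` instead of the (definitionally equal) `(f.restrictWeak.obj W).M`. -/
def complexHom (h : V ⟶ f.restrictWeak.obj W) : V.M ⟶ W.M := h.hom

section complexHom

variable (h : V ⟶ f.restrictWeak.obj W) {n : ℤ} (m : V.M.X n)

lemma complexHom_comm_π (a : P.A) : V.π a ≫ f.complexHom h = f.complexHom h ≫ W.π (f.fa a) :=
  h.comm_π a

lemma complexHom_comm_ν_apply (g : D.G) :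
    (f.complexHom h).f n ((V.ν g : End V.M).f n m)
      = (W.ν g : End W.M).f n ((f.complexHom h).f n m) :=
  h.comm_ν_apply g m

lemma complexHom_comm_dν_apply (ξ : D.L) :
    (f.complexHom h).f n ((V.dν ξ).f n m) = (W.dν ξ).f n ((f.complexHom h).f n m) :=
  h.comm_dν_apply ξ m

end complexHom

def baseChangeLiftComplex (h : V.M ⟶ W.M) (hπ : ∀ a, V.π a ≫ h = h ≫ W.π (f.fa a)) :
    f.baseChangeComplex V ⟶ W.M where
  f n := ModuleCat.ofHom (Submodule.liftQ _ (TensorProduct.lift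
    { toFun b := ((h ≫ W.π b).f n).hom
      map_add' _ _ := by simp
      map_smul' _ _ := by simp })
    (balancedRel_le_ker_lift fun b a m => by
      have hπ_apply : h.f n ((V.π a).f n m) = (W.π (f.fa a)).f n (h.f n m) :=
        congr(($(hπ a)).f n m)
      simp [End.mul_def, hπ_apply]))
  comm' i j _ := baseChangeComplex_X_hom_ext fun b m => ((h ≫ W.π b).comm_apply i j m).symm

@[simp] lemma baseChangeLiftComplex_f_tmul (h : V.M ⟶ W.M) hπ {n : ℤ} (b : Q.A) (m : V.M.X n) :
    ((f.baseChangeLiftComplex h hπ).f n).hom (f.tmul b m) = (W.π b).f n (h.f n m) := rfl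

def baseChangeLift (h : V ⟶ f.restrictWeak.obj W) : f.baseChange.obj V ⟶ W where
  hom := f.baseChangeLiftComplex (f.complexHom h) (f.complexHom_comm_π h)
  comm_π b := by
    change f.baseChangeMul V b ≫ f.baseChangeLiftComplex _ _
      = f.baseChangeLiftComplex _ _ ≫ W.π b
    refine baseChangeComplex_hom_ext fun n b m => ?_
    simp [End.mul_def]
  comm_ν g := by
    change f.baseChangeAct V g ≫ f.baseChangeLiftComplex _ _
      = f.baseChangeLiftComplex _ _ ≫ (W.ν g : End W.M)
    refine baseChangeComplex_hom_ext fun n b m => ?_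
    simp [complexHom_comm_ν_apply, W.π_equiv_apply]
  comm_dν ξ := by
    change f.baseChangeDν V ξ ≫ f.baseChangeLiftComplex _ _
      = f.baseChangeLiftComplex _ _ ≫ W.dν ξ
    refine baseChangeComplex_hom_ext fun n b m => ?_
    simp [complexHom_comm_dν_apply, W.dν_π_apply]

def baseChangeAdjunction : f.baseChange ⊣ f.restrictWeak :=
  Adjunction.mkOfHomEquiv
    { homEquiv V W :=
        { toFun g := f.baseChangeUnit V ≫ f.restrictWeak.map g
          invFun := f.baseChangeLift
          left_inv g := WeakMod.Hom.ext <| baseChangeComplex_hom_ext fun n b m =>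
            calc (W.π b).f n (g.hom.f n (f.tmul 1 m))
                _ = g.hom.f n (f.tmul (b * 1) m) := (g.comm_π_apply b _).symm
                _ = g.hom.f n (f.tmul b m) := by rw [mul_one]
          right_inv h := WeakMod.Hom.ext <| HomologicalComplex.hom_ext _ _ fun n =>
            ModuleCat.hom_ext <| LinearMap.ext fun m =>
              congr(($(map_one W.π)).f n ((f.complexHom h).f n m)) }
      homEquiv_naturality_left_symm _ _ :=
        WeakMod.Hom.ext <| baseChangeComplex_hom_ext fun _ _ _ => rfl
      homEquiv_naturality_right _ _ := by
        simp only [Equiv.coe_fn_mk, Functor.map_comp, Category.assoc] }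

lemma isStrict_baseChangeObj (hV : IsStrict P V) : IsStrict Q (f.baseChangeObj V) := fun ξ =>
  baseChangeComplex_hom_ext fun n b m => by
    simp [hV ξ, ← tmul_mul_fa, f.comm_ψ, Q.dφ_eq]

def baseChangeStrict :
    ObjectProperty.FullSubcategory (IsStrict P) ⥤ ObjectProperty.FullSubcategory (IsStrict Q) :=
  ObjectProperty.lift _ (ObjectProperty.ι _ ⋙ f.baseChange)
    fun V => f.isStrict_baseChangeObj V.property

noncomputable def baseChangeStrictAdjunction : f.baseChangeStrict ⊣ f.restrict :=
  f.baseChangeAdjunction.restrictFullyFaithful (ObjectProperty.fullyFaithfulι _)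
    (ObjectProperty.fullyFaithfulι _) (ObjectProperty.liftCompιIso _ _ _).symm
    (ObjectProperty.liftCompιIso _ _ _).symm

end PairHomId

theorem baseChange_strict_and_adjoint (f : PairHomId P Q) :
    (∃ (Pw : WeakMod P.toWeakPair ⥤ WeakMod Q.toWeakPair)
        (_ : Pw ⊣ f.restrictWeak),
        ∀ V : WeakMod P.toWeakPair, IsStrict P V → IsStrict Q (Pw.obj V)) ∧
      f.restrict.IsRightAdjoint :=
  ⟨⟨f.baseChange, f.baseChangeAdjunction, fun _ hV => f.isStrict_baseChangeObj hV⟩,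
    f.baseChangeStrictAdjunction.isRightAdjoint⟩
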